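/- arXiv:1712.01221 — 2 statements merged into one kernel-verified Lean document; each statement's English description precedes it below -/
import Mathlib

section
/- For t ∈ ℝ, t > 0, and a complex number w with Im(w) > 0, the contour integral (1/(2πi)) ∫_{ℝ_{>0}·w} (2t/(z² − t²)) e^{−w/z} dz equals −(1/(2π)) ∫₀^∞ (2t/(σ² + t²)) e^{iw/σ} dσ, i.e. the ray of integration ℝ_{>0}·w can be rotated to the positive imaginary axis z = iσ without changing the value of the integral. -/
/-!
The substitutions `z = s w` with `s = 1/u`, and `σ = 1/x`, turn the two sides into
`∫₀^∞ 2tw e^{-u} / (w² - t²u²) du` and `∫₀^∞ 2t e^{iwx} / (1 + t²x²) dx`. By partial fractions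
both are sums of integrals `∫₀^∞ e^{au} / (b + cu) du` with `a = -1`, `b = iw`, `c = ±it`, and
writing `1 / (b + cu) = -∫₀^∞ e^{(b + cu)x} dx` shows by Fubini that such an integral is
symmetric in `a` and `b`.
-/

open Real MeasureTheory Complex Set

lemma re_add_mul_le {b c : ℂ} (hc : c.re ≤ 0) {u : ℝ} (hu : 0 ≤ u) : (b + c * u).re ≤ b.re := by
  simpa using mul_nonpos_of_nonpos_of_nonneg hc hu

lemma add_mul_ne_zero_of_re_neg {b c : ℂ} (hb : b.re < 0) (hc : c.re ≤ 0) {u : ℝ} (hu : 0 ≤ u) :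
    b + c * u ≠ 0 :=
  fun h => by simpa [h] using (re_add_mul_le hc hu).trans_lt hb

lemma integrableOn_cexp_mul_div_add_mul {a b c : ℂ} (ha : a.re < 0) (hb : b.re < 0)
    (hc : c.re ≤ 0) :
    IntegrableOn (fun u : ℝ => cexp (a * u) / (b + c * u)) (Ioi 0) := by
  refine ((integrableOn_exp_mul_complex_Ioi ha 0).div_const ((-b.re : ℝ) : ℂ)).mono
    (Measurable.aestronglyMeasurable (by fun_prop)) ?_
  filter_upwards [ae_restrict_mem measurableSet_Ioi] with u hu
  rw [norm_div, norm_div, Complex.norm_real, Real.norm_of_nonneg (by linarith)]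
  gcongr
  · linarith
  · exact (neg_le_neg (re_add_mul_le hc hu.le)).trans ((neg_le_abs _).trans (abs_re_le_norm _))

lemma integral_Ioi_cexp_add_mul {z : ℂ} (hz : z.re < 0) (k : ℂ) :
    ∫ x in Ioi (0 : ℝ), cexp (k + z * x) = -cexp k / z := by
  simp_rw [Complex.exp_add, integral_const_mul, integral_exp_mul_complex_Ioi hz]
  simp [div_eq_mul_inv]

lemma integral_cexp_mul_div_add_mul_comm {a b c : ℂ} (ha : a.re < 0) (hb : b.re < 0)
    (hc : c.re ≤ 0) :
    ∫ u in Ioi (0 : ℝ), cexp (a * u) / (b + c * u)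
      = ∫ x in Ioi (0 : ℝ), cexp (b * x) / (a + c * x) := by
  set F : ℝ → ℝ → ℂ := fun u x => cexp (a * u + b * x + c * u * x)
  have hF : Integrable (Function.uncurry F)
      ((volume.restrict (Ioi 0)).prod (volume.restrict (Ioi 0))) := by
    refine ((integrableOn_exp_mul_complex_Ioi ha 0).mul_prod
      (integrableOn_exp_mul_complex_Ioi hb 0)).mono
      (Measurable.aestronglyMeasurable (by fun_prop)) ?_
    rw [Measure.prod_restrict]
    filter_upwards [ae_restrict_mem (measurableSet_Ioi.prod measurableSet_Ioi)]
      with ⟨u, x⟩ ⟨hu, hx⟩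
    simp only [Function.uncurry_apply_pair, F, ← Complex.exp_add, Complex.norm_exp]
    have : (c * u * x).re ≤ 0 := by
      simpa [mul_assoc] using mul_nonpos_of_nonpos_of_nonneg hc (mul_nonneg hu.le hx.le)
    exact Real.exp_le_exp.mpr (by simp only [add_re]; linarith)
  have inner_x : ∀ u ∈ Ioi (0 : ℝ), ∫ x in Ioi (0 : ℝ), F u x
      = -(cexp (a * u) / (b + c * u)) := by
    intro u hu
    rw [← neg_div, ← integral_Ioi_cexp_add_mul ((re_add_mul_le hc hu.le).trans_lt hb)]
    congr 1 with x
    simp only [F]; ring_nf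
  have inner_u : ∀ x ∈ Ioi (0 : ℝ), ∫ u in Ioi (0 : ℝ), F u x
      = -(cexp (b * x) / (a + c * x)) := by
    intro x hx
    rw [← neg_div, ← integral_Ioi_cexp_add_mul ((re_add_mul_le hc hx.le).trans_lt ha)]
    congr 1 with u
    simp only [F]; ring_nf
  have swap := integral_integral_swap hF
  rw [setIntegral_congr_fun measurableSet_Ioi inner_x,
    setIntegral_congr_fun measurableSet_Ioi inner_u, integral_neg, integral_neg] at swap
  exact neg_injective swap

lemma div_add_div_add_sub {K : Type*} [Field K] (e b d : K) (h₁ : b + d ≠ 0) (h₂ : b - d ≠ 0) :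
    e / (b + d) + e / (b - d) = 2 * b * e / (b ^ 2 - d ^ 2) := by
  rw [div_add_div _ _ h₁ h₂]
  congr 1 <;> ring

lemma integral_cexp_mul_mul_div_sq_sub_sq_comm {a b c : ℂ} (ha : a.re < 0) (hb : b.re < 0)
    (hc : c.re = 0) :
    ∫ u in Ioi (0 : ℝ), 2 * b * cexp (a * u) / (b ^ 2 - c ^ 2 * u ^ 2)
      = ∫ x in Ioi (0 : ℝ), 2 * a * cexp (b * x) / (a ^ 2 - c ^ 2 * x ^ 2) := by
  have hc' : (-c).re ≤ 0 := by simp [hc]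
  have split {a b : ℂ} (hb : b.re < 0) : ∀ u ∈ Ioi (0 : ℝ),
      2 * b * cexp (a * u) / (b ^ 2 - c ^ 2 * u ^ 2)
        = cexp (a * u) / (b + c * u) + cexp (a * u) / (b + -c * u) := by
    intro u hu
    have h₁ := add_mul_ne_zero_of_re_neg hb hc.le hu.le
    have h₂ := add_mul_ne_zero_of_re_neg hb hc' hu.le
    rw [neg_mul, ← sub_eq_add_neg] at h₂ ⊢
    rw [div_add_div_add_sub _ _ _ h₁ h₂, mul_pow]
  rw [setIntegral_congr_fun measurableSet_Ioi (split hb),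
    setIntegral_congr_fun measurableSet_Ioi (split ha),
    integral_add (integrableOn_cexp_mul_div_add_mul ha hb hc.le)
      (integrableOn_cexp_mul_div_add_mul ha hb hc'),
    integral_add (integrableOn_cexp_mul_div_add_mul hb ha hc.le)
      (integrableOn_cexp_mul_div_add_mul hb ha hc'),
    integral_cexp_mul_div_add_mul_comm ha hb hc.le,
    integral_cexp_mul_div_add_mul_comm ha hb hc']

lemma integral_Ioi_comp_inv {E : Type*} [NormedAddCommGroup E] [NormedSpace ℝ E] (g : ℝ → E) :
    ∫ s in Ioi (0 : ℝ), (s ^ 2)⁻¹ • g s⁻¹ = ∫ u in Ioi (0 : ℝ), g u := by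
  rw [← integral_comp_rpow_Ioi g (p := -1) (by norm_num)]
  refine setIntegral_congr_fun measurableSet_Ioi fun s hs => ?_
  rw [Real.rpow_neg_one, show (-1 : ℝ) - 1 = ((-2 : ℤ) : ℝ) by norm_num, Real.rpow_intCast]
  simp

lemma mul_integral_cexp_neg_div_sq_sub {w : ℂ} (hw : 0 < w.im) (t : ℝ) :
    I * ∫ u in Ioi (0 : ℝ), 2 * w * cexp (-u) / (w ^ 2 - t ^ 2 * u ^ 2)
      = ∫ x in Ioi (0 : ℝ), 2 * cexp (I * w * x) / (1 + t ^ 2 * x ^ 2) := by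
  have key := integral_cexp_mul_mul_div_sq_sub_sq_comm (a := -1) (b := I * w) (c := I * t)
    (by simp) (by simpa using hw) (by simp)
  have lhs (u : ℝ) : 2 * (I * w) * cexp (-1 * u) / ((I * w) ^ 2 - (I * t) ^ 2 * u ^ 2)
      = -(I * (2 * w * cexp (-u) / (w ^ 2 - t ^ 2 * u ^ 2))) := by
    rw [show (I * w) ^ 2 - (I * t) ^ 2 * u ^ 2 = -(w ^ 2 - t ^ 2 * u ^ 2) by
      simp only [mul_pow, I_sq]; ring, div_neg, neg_one_mul]
    ring
  have rhs (x : ℝ) : 2 * -1 * cexp (I * w * x) / ((-1) ^ 2 - (I * t) ^ 2 * x ^ 2)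
      = -(2 * cexp (I * w * x) / (1 + t ^ 2 * x ^ 2)) := by
    rw [show (-1 : ℂ) ^ 2 - (I * t) ^ 2 * x ^ 2 = 1 + t ^ 2 * x ^ 2 by
      simp only [mul_pow, I_sq]; ring]
    ring
  simpa only [lhs, rhs, integral_neg, integral_const_mul, neg_inj] using key

lemma integral_ray_eq_integral_cexp_neg (t : ℝ) {w : ℂ} (hw : w ≠ 0) :
    ∫ s in Ioi (0 : ℝ), (2 * (t : ℂ) / ((s * w) ^ 2 - (t : ℂ) ^ 2)) * cexp (-(w / (s * w))) * w
      = (t : ℂ) * ∫ u in Ioi (0 : ℝ), 2 * w * cexp (-u) / (w ^ 2 - t ^ 2 * u ^ 2) := by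
  rw [← integral_const_mul, eq_comm, ← integral_Ioi_comp_inv]
  refine setIntegral_congr_fun measurableSet_Ioi fun s hs => ?_
  have hs0 : (s : ℂ) ≠ 0 := by exact_mod_cast hs.ne'
  have hden : (s : ℂ) ^ 2 * (w ^ 2 - t ^ 2 * (s : ℂ)⁻¹ ^ 2) = (s * w) ^ 2 - t ^ 2 := by
    field_simp
  have hexp : w / (s * w) = (s : ℂ)⁻¹ := by field_simp
  rw [Complex.real_smul, ← hden, hexp, mul_comm ((s : ℂ) ^ 2), ← div_div]
  push_cast
  ring

lemma integral_imAxis_eq_integral_cexp_I_mul (t : ℝ) (w : ℂ) :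
    ∫ σ in Ioi (0 : ℝ), (2 * (t : ℂ) / ((σ : ℂ) ^ 2 + (t : ℂ) ^ 2)) * cexp (I * w / σ)
      = (t : ℂ) * ∫ x in Ioi (0 : ℝ), 2 * cexp (I * w * x) / (1 + t ^ 2 * x ^ 2) := by
  rw [← integral_const_mul, eq_comm, ← integral_Ioi_comp_inv]
  refine setIntegral_congr_fun measurableSet_Ioi fun σ hσ => ?_
  have hσ0 : (σ : ℂ) ≠ 0 := by exact_mod_cast hσ.ne'
  have hden : (σ : ℂ) ^ 2 * (1 + t ^ 2 * (σ : ℂ)⁻¹ ^ 2) = σ ^ 2 + t ^ 2 := by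
    field_simp
  rw [Complex.real_smul, ← hden, mul_comm ((σ : ℂ) ^ 2), ← div_div, div_eq_mul_inv (I * w)]
  push_cast
  ring

theorem contour_rotation_general (t : ℝ) (w : ℂ) (hw : 0 < w.im) :
    (1 / (2 * Real.pi * Complex.I)) *
        ∫ s in Set.Ioi (0 : ℝ),
          (2 * (t : ℂ) / ((s * w) ^ 2 - (t : ℂ) ^ 2)) * Complex.exp (-(w / (s * w))) * w
      = -(1 / (2 * Real.pi)) *
        ∫ σ in Set.Ioi (0 : ℝ),
          (2 * (t : ℂ) / ((σ : ℂ) ^ 2 + (t : ℂ) ^ 2)) * Complex.exp (Complex.I * w / σ) := by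
  have hw0 : w ≠ 0 := by rintro rfl; simp at hw
  rw [integral_ray_eq_integral_cexp_neg t hw0, integral_imAxis_eq_integral_cexp_I_mul,
    ← mul_integral_cexp_neg_div_sq_sub hw t]
  field_simp
  ring_nf
  simp [I_sq]

/-- for `t > 0` real and `w ∈ ℂ` with `Im w > 0`, the contour integral of
`(2t/(z² − t²)) e^{−w/z}` over the ray `ℝ_{>0}·w` (parametrised by `z = s·w`, `s > 0`)
can be rotated to the positive imaginary axis `z = iσ`:
`(1/(2πi)) ∫_{ℝ_{>0}w} (2t/(z²−t²)) e^{−w/z} dz = −(1/(2π)) ∫₀^∞ (2t/(σ²+t²)) e^{iw/σ} dσ`. -/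
theorem contour_rotation (t : ℝ) (ht : 0 < t) (w : ℂ) (hw : 0 < w.im) :
    (1 / (2 * Real.pi * Complex.I)) *
        ∫ s in Set.Ioi (0 : ℝ),
          (2 * (t : ℂ) / ((s * w) ^ 2 - (t : ℂ) ^ 2)) * Complex.exp (-(w / (s * w))) * w
      = -(1 / (2 * Real.pi)) *
        ∫ σ in Set.Ioi (0 : ℝ),
          (2 * (t : ℂ) / ((σ : ℂ) ^ 2 + (t : ℂ) ^ 2)) * Complex.exp (Complex.I * w / σ) :=
  contour_rotation_general t w hw
end

section
/- For n₁ ∈ ℝ, v ∈ ℝ, and t > 0, the limit as G → 0 within {Re(G) > 0, Im(G) > 0} of the double integral ∫₀^∞ dσ (1/π)·t/(1+(σt)²) e^{iσ(G+v)} ∫₀^∞ dτ (1/π)·σ/(1+(τσ)²) e^{−G/τ} equals (1/2)∫₀^∞ dσ (1/π)·t/(1+(σt)²) e^{iσ v}. -/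
/-!
The inner integral is the half-line mass `1/2` of a Cauchy density, damped by the factor
`e^{-G/τ}`, which has modulus at most `1` when `Re G ≥ 0` and tends to `1` as `G → 0`.
Dominated convergence therefore makes it tend to `1/2`, with modulus at most `1/2` throughout.
For `Im G ≥ 0` also `|e^{iσ(G+v)}| ≤ 1`, so the outer integrand is dominated by the integrable
Cauchy weight in `σ`, and a second application of dominated convergence gives the limit.
-/

open Real MeasureTheory Filter Topology Set

/-- The Cauchy density `ProbabilityTheory.cauchyPDFReal 0 s⁻¹`, of scale `1 / s`. -/
noncomputable def cauchyDensity (s τ : ℝ) : ℝ := 1 / π * s / (1 + (τ * s) ^ 2)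

theorem cauchyDensity_nonneg {s : ℝ} (hs : 0 ≤ s) (τ : ℝ) : 0 ≤ cauchyDensity s τ := by
  unfold cauchyDensity; positivity

theorem integrable_cauchyDensity (s : ℝ) : Integrable (cauchyDensity s) := by
  rcases eq_or_ne s 0 with rfl | hs
  · exact (integrable_zero ℝ ℝ volume).congr (ae_of_all _ fun τ => by simp [cauchyDensity])
  have h := (integrable_inv_one_add_sq.comp_mul_right' hs).const_mul (1 / π * s)
  refine h.congr (ae_of_all _ fun τ => ?_)
  simp only [cauchyDensity]
  ring

theorem integral_Ioi_cauchyDensity {s : ℝ} (hs : 0 < s) :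
    ∫ τ in Ioi 0, cauchyDensity s τ = 1 / 2 := by
  have hscale : ∫ τ in Ioi 0, (1 + (τ * s) ^ 2)⁻¹ = s⁻¹ * (π / 2) := by
    have h := integral_comp_mul_right_Ioi (fun x => (1 + x ^ 2)⁻¹) 0 hs
    simp only [zero_mul, integral_Ioi_inv_one_add_sq, arctan_zero, sub_zero, smul_eq_mul] at h
    exact h
  calc ∫ τ in Ioi 0, cauchyDensity s τ
      = 1 / π * s * ∫ τ in Ioi 0, (1 + (τ * s) ^ 2)⁻¹ := by
        rw [← integral_const_mul]; simp only [cauchyDensity, div_eq_mul_inv]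
    _ = 1 / 2 := by rw [hscale]; field_simp

theorem tendsto_integral_mul_of_norm_le_one {α ι 𝕜 : Type*} [MeasurableSpace α] [RCLike 𝕜]
    {μ : Measure α} {l : Filter ι} [l.IsCountablyGenerated] {f : α → 𝕜}
    (hf : Integrable f μ) {g : ι → α → 𝕜} {g₀ : α → 𝕜}
    (hmeas : ∀ᶠ i in l, AEStronglyMeasurable (g i) μ)
    (hbound : ∀ᶠ i in l, ∀ᵐ x ∂μ, ‖g i x‖ ≤ 1)
    (hlim : ∀ᵐ x ∂μ, Tendsto (fun i => g i x) l (𝓝 (g₀ x))) :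
    Tendsto (fun i => ∫ x, f x * g i x ∂μ) l (𝓝 (∫ x, f x * g₀ x ∂μ)) := by
  refine tendsto_integral_filter_of_dominated_convergence (fun x => ‖f x‖)
    (hmeas.mono fun i hi => hf.aestronglyMeasurable.mul hi) ?_ hf.norm
    (hlim.mono fun x hx => tendsto_const_nhds.mul hx)
  filter_upwards [hbound] with i hi
  filter_upwards [hi] with x hx
  rw [norm_mul]
  exact mul_le_of_le_one_right (norm_nonneg _) hx

theorem norm_cexp_neg_div_le_one {G : ℂ} (hG : 0 ≤ G.re) {τ : ℝ} (hτ : 0 ≤ τ) :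
    ‖Complex.exp (-(G / τ))‖ ≤ 1 := by
  rw [Complex.norm_exp, Real.exp_le_one_iff, Complex.neg_re, Complex.div_ofReal_re,
    neg_nonpos]
  exact div_nonneg hG hτ

theorem norm_cexp_I_mul_le_one {G : ℂ} (hG : 0 ≤ G.im) {σ : ℝ} (hσ : 0 ≤ σ) (v : ℝ) :
    ‖Complex.exp (Complex.I * σ * (G + v))‖ ≤ 1 := by
  have hre : (Complex.I * σ * (G + v)).re = -(σ * G.im) := by
    simp [Complex.mul_re, Complex.mul_im]
  rw [Complex.norm_exp, Real.exp_le_one_iff, hre, neg_nonpos]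
  exact mul_nonneg hσ hG

noncomputable def dampedHalfMass (G : ℂ) (σ : ℝ) : ℂ :=
  ∫ τ in Ioi 0, (cauchyDensity σ τ : ℂ) * Complex.exp (-(G / τ))

theorem aestronglyMeasurable_dampedHalfMass (G : ℂ) (μ : Measure ℝ) :
    AEStronglyMeasurable (dampedHalfMass G) μ := by
  have h : Measurable fun p : ℝ × ℝ =>
      (cauchyDensity p.1 p.2 : ℂ) * Complex.exp (-(G / p.2)) := by
    unfold cauchyDensity; fun_prop
  exact h.aestronglyMeasurable.integral_prod_right'

theorem norm_dampedHalfMass_le {G : ℂ} (hG : 0 ≤ G.re) {σ : ℝ} (hσ : 0 < σ) :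
    ‖dampedHalfMass G σ‖ ≤ 1 / 2 := by
  rw [← integral_Ioi_cauchyDensity hσ]
  refine norm_integral_le_of_norm_le (integrable_cauchyDensity σ).integrableOn ?_
  refine (ae_restrict_iff' measurableSet_Ioi).mpr (ae_of_all _ fun τ hτ => ?_)
  rw [norm_mul, Complex.norm_real, Real.norm_of_nonneg (cauchyDensity_nonneg hσ.le τ)]
  exact mul_le_of_le_one_right (cauchyDensity_nonneg hσ.le τ) (norm_cexp_neg_div_le_one hG hτ.le)

theorem tendsto_dampedHalfMass {σ : ℝ} (hσ : 0 < σ) :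
    Tendsto (dampedHalfMass · σ) (𝓝[{G | 0 ≤ G.re}] 0) (𝓝 (1 / 2)) := by
  have hhalf : ∫ τ in Ioi 0, (cauchyDensity σ τ : ℂ) * 1 = 1 / 2 := by
    rw [show (1 / 2 : ℂ) = ((1 / 2 : ℝ) : ℂ) by norm_num, ← integral_Ioi_cauchyDensity hσ]
    simp only [mul_one]
    exact integral_ofReal
  rw [← hhalf]
  refine tendsto_integral_mul_of_norm_le_one (integrable_cauchyDensity σ).ofReal.integrableOn
    (Eventually.of_forall fun G => ?_) ?_ ?_
  · exact (by fun_prop : Measurable fun τ : ℝ => Complex.exp (-(G / τ))).aestronglyMeasurable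
  · filter_upwards [self_mem_nhdsWithin] with G hG
    exact (ae_restrict_iff' measurableSet_Ioi).mpr
      (ae_of_all _ fun τ hτ => norm_cexp_neg_div_le_one hG hτ.le)
  · refine ae_of_all _ fun τ => tendsto_nhdsWithin_of_tendsto_nhds ?_
    have hcont : Continuous fun G : ℂ => Complex.exp (-(G / τ)) := by fun_prop
    simpa using hcont.tendsto 0

theorem tendsto_integral_cauchyDensity_mul_cexp_mul_dampedHalfMass (v t : ℝ) :
    Tendsto (fun G : ℂ => ∫ σ in Ioi 0,
        (cauchyDensity t σ : ℂ) * Complex.exp (Complex.I * σ * (G + v)) * dampedHalfMass G σ)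
      (𝓝[{G | 0 ≤ G.re ∧ 0 ≤ G.im}] 0)
      (𝓝 (1 / 2 * ∫ σ in Ioi 0,
        (cauchyDensity t σ : ℂ) * Complex.exp (Complex.I * σ * v))) := by
  have hmeas : ∀ G : ℂ, AEStronglyMeasurable
      (fun σ : ℝ => Complex.exp (Complex.I * σ * (G + v)) * dampedHalfMass G σ)
      (volume.restrict (Ioi 0)) := fun G =>
    (by fun_prop : Continuous fun σ : ℝ => Complex.exp (Complex.I * σ * (G + v)))
      |>.aestronglyMeasurable.mul (aestronglyMeasurable_dampedHalfMass G _)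
  have hbound : ∀ᶠ G in 𝓝[{G | 0 ≤ G.re ∧ 0 ≤ G.im}] 0,
      ∀ᵐ σ : ℝ ∂volume.restrict (Ioi 0),
        ‖Complex.exp (Complex.I * σ * (G + v)) * dampedHalfMass G σ‖ ≤ 1 := by
    filter_upwards [self_mem_nhdsWithin] with G hG
    refine (ae_restrict_iff' measurableSet_Ioi).mpr (ae_of_all _ fun σ (hσ : 0 < σ) => ?_)
    rw [norm_mul]
    calc _ ≤ 1 * (1 / 2) := mul_le_mul (norm_cexp_I_mul_le_one hG.2 hσ.le v)
            (norm_dampedHalfMass_le hG.1 hσ) (norm_nonneg _) zero_le_one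
      _ ≤ 1 := by norm_num
  have hlim : ∀ᵐ σ : ℝ ∂volume.restrict (Ioi 0), Tendsto
      (fun G : ℂ => Complex.exp (Complex.I * σ * (G + v)) * dampedHalfMass G σ)
      (𝓝[{G | 0 ≤ G.re ∧ 0 ≤ G.im}] 0)
      (𝓝 (Complex.exp (Complex.I * σ * v) * (1 / 2))) := by
    refine (ae_restrict_iff' measurableSet_Ioi).mpr (ae_of_all _ fun σ (hσ : 0 < σ) => ?_)
    have hexp : Continuous fun G : ℂ => Complex.exp (Complex.I * σ * (G + v)) := by fun_prop
    refine Tendsto.mul ?_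
      ((tendsto_dampedHalfMass hσ).mono_left (nhdsWithin_mono _ fun G hG => hG.1))
    simpa using (hexp.tendsto 0).mono_left nhdsWithin_le_nhds
  convert tendsto_integral_mul_of_norm_le_one (f := fun σ : ℝ => (cauchyDensity t σ : ℂ))
    (integrable_cauchyDensity t).ofReal.integrableOn (Eventually.of_forall hmeas) hbound hlim
    using 2 with G
  · exact setIntegral_congr_fun measurableSet_Ioi fun σ _ => mul_assoc _ _ _
  · rw [← integral_const_mul]
    exact integral_congr_ae (ae_of_all _ fun σ => by ring)

theorem double_integral_limit_general (v t : ℝ) :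
    Tendsto
      (fun G : ℂ =>
        ∫ σ in Set.Ioi (0 : ℝ),
          (((1 / π) * t / (1 + (σ * t) ^ 2) : ℝ) : ℂ) *
            Complex.exp (Complex.I * σ * (G + v)) *
            ∫ τ in Set.Ioi (0 : ℝ),
              (((1 / π) * σ / (1 + (τ * σ) ^ 2) : ℝ) : ℂ) * Complex.exp (-(G / τ)))
      (nhdsWithin 0 {G : ℂ | 0 < G.re ∧ 0 < G.im})
      (nhds ((1 / 2) * ∫ σ in Set.Ioi (0 : ℝ),
        (((1 / π) * t / (1 + (σ * t) ^ 2) : ℝ) : ℂ) * Complex.exp (Complex.I * σ * v))) :=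
  (tendsto_integral_cauchyDensity_mul_cexp_mul_dampedHalfMass v t).mono_left
    (nhdsWithin_mono _ fun _ hG => ⟨hG.1.le, hG.2.le⟩)

/-- for real `v` and `t > 0`, as `G → 0` within the open quadrant
`{Re G > 0, Im G > 0}`,
`∫₀^∞ (1/π) t/(1+(σt)²) e^{iσ(G+v)} (∫₀^∞ (1/π) σ/(1+(τσ)²) e^{−G/τ} dτ) dσ`
tends to `(1/2)∫₀^∞ (1/π) t/(1+(σt)²) e^{iσv} dσ`. -/
theorem double_integral_limit (v t : ℝ) (ht : 0 < t) :
    Tendsto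
      (fun G : ℂ =>
        ∫ σ in Set.Ioi (0 : ℝ),
          (((1 / π) * t / (1 + (σ * t) ^ 2) : ℝ) : ℂ) *
            Complex.exp (Complex.I * σ * (G + v)) *
            ∫ τ in Set.Ioi (0 : ℝ),
              (((1 / π) * σ / (1 + (τ * σ) ^ 2) : ℝ) : ℂ) * Complex.exp (-(G / τ)))
      (nhdsWithin 0 {G : ℂ | 0 < G.re ∧ 0 < G.im})
      (nhds ((1 / 2) * ∫ σ in Set.Ioi (0 : ℝ),
        (((1 / π) * t / (1 + (σ * t) ^ 2) : ℝ) : ℂ) * Complex.exp (Complex.I * σ * v))) :=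
  double_integral_limit_general v t
end
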